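/- arXiv:1707.05033 — 3 statements merged into one kernel-verified Lean document; each statement's English description precedes it below -/
import Mathlib

section
/- Let ξ > 0. Then sup_{k ∈ ℕ} | p_DGPD(k; σ, ξ) / f_GPD(k; σ, ξ) − 1 | → 0 as σ → ∞. More precisely, for all k ∈ ℕ and σ > 0, p_DGPD(k; σ, ξ)/f_GPD(k; σ, ξ) = {1 − (1 + ξ/(σ + ξk))^{−1/ξ}}·(σ + ξk), and this quantity converges to 1 uniformly in k = 0, 1, 2, … as σ → ∞. -/
/-- GPD survival function for `ξ > 0`: `F̄_GPD(x; σ, ξ) = (1 + ξx/σ)^(-1/ξ)`. -/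
noncomputable def gpdSurv (σ ξ x : ℝ) : ℝ := (1 + ξ * x / σ) ^ (-1 / ξ)

/-- GPD density for `ξ > 0`: `f_GPD(x; σ, ξ) = σ⁻¹ (1 + ξx/σ)^(-1/ξ-1)`. -/
noncomputable def fGPD (σ ξ x : ℝ) : ℝ := σ⁻¹ * (1 + ξ * x / σ) ^ (-1 / ξ - 1)

/-- D-GPD probability mass function: `p_DGPD(k;σ,ξ) = F̄_GPD(k;σ,ξ) - F̄_GPD(k+1;σ,ξ)`. -/
noncomputable def pDGPD (σ ξ : ℝ) (k : ℕ) : ℝ :=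
  gpdSurv σ ξ k - gpdSurv σ ξ (k + 1)

/-!
With `t = σ + ξk`, `a = 1/ξ` and `u = ξ/t` the ratio `p_DGPD/f_GPD` equals `(1 - (1+u)^(-a)) / (a u)`,
a difference quotient of `x ↦ x^(-a)` at `1`. The Bernoulli inequality `1 - a u ≤ (1+u)^(-a)` (from
`log x ≤ x - 1` and `1 + y ≤ exp y`), used at `1 + u` and at its reciprocal, traps this quotient between
`(1+u)^(-(a+1)) ≥ 1 - (a+1)u` and `1`. Hence it is within `(a+1)u = (1+ξ)/t ≤ (1+ξ)/σ` of `1`, uniformly in `k`.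
-/

open Real

theorem one_sub_mul_le_one_add_rpow_neg {a u : ℝ} (ha : 0 ≤ a) (hu : -1 < u) :
    1 - a * u ≤ (1 + u) ^ (-a) := by
  have hpos : 0 < 1 + u := by linarith
  calc 1 - a * u ≤ log (1 + u) * -a + 1 := by
        nlinarith [log_le_sub_one_of_pos hpos]
    _ ≤ exp (log (1 + u) * -a) := add_one_le_exp _
    _ = (1 + u) ^ (-a) := (rpow_def_of_pos hpos _).symm

theorem mul_mul_one_add_rpow_neg_le_one_sub {a u : ℝ} (ha : 0 ≤ a) (hu : -1 < u) :
    a * u * (1 + u) ^ (-(a + 1)) ≤ 1 - (1 + u) ^ (-a) := by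
  have hpos : 0 < 1 + u := by linarith
  set p := (1 + u) ^ (-a) with hp
  have hp_pos : 0 < p := rpow_pos_of_pos hpos _
  -- Bernoulli at the reciprocal point `(1 + u)⁻¹ = 1 - u / (1 + u)`.
  have hrecip : 1 + a * u / (1 + u) ≤ p⁻¹ := by
    have h := one_sub_mul_le_one_add_rpow_neg ha (u := -(u / (1 + u)))
      (by rw [neg_lt_neg_iff, div_lt_one hpos]; linarith)
    rwa [show 1 + -(u / (1 + u)) = (1 + u)⁻¹ by field_simp; ring, inv_rpow hpos.le,
      mul_neg, sub_neg_eq_add, ← mul_div_assoc] at h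
  rw [neg_add, ← sub_eq_add_neg, rpow_sub_one hpos.ne', ← hp]
  have hscaled := mul_le_mul_of_nonneg_left hrecip hp_pos.le
  rw [mul_inv_cancel₀ hp_pos.ne'] at hscaled
  calc a * u * (p / (1 + u)) = p * (a * u / (1 + u)) := by ring
    _ ≤ 1 - p := by linarith

theorem abs_one_sub_rpow_neg_div_sub_one_le {a u : ℝ} (ha : 0 < a) (hu : 0 < u) :
    |(1 - (1 + u) ^ (-a)) / (a * u) - 1| ≤ (a + 1) * u := by
  have hau : 0 < a * u := mul_pos ha hu
  have hupper : (1 - (1 + u) ^ (-a)) / (a * u) ≤ 1 := by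
    rw [div_le_one hau]
    linarith [one_sub_mul_le_one_add_rpow_neg ha.le (by linarith : -1 < u)]
  have hlower : 1 - (a + 1) * u ≤ (1 - (1 + u) ^ (-a)) / (a * u) := by
    calc 1 - (a + 1) * u ≤ (1 + u) ^ (-(a + 1)) :=
          one_sub_mul_le_one_add_rpow_neg (by linarith) (by linarith)
      _ ≤ (1 - (1 + u) ^ (-a)) / (a * u) := by
          rw [le_div_iff₀ hau, mul_comm]
          exact mul_mul_one_add_rpow_neg_le_one_sub ha.le (by linarith)
  rw [abs_le]
  constructor <;> linarith [mul_pos (by linarith : 0 < a + 1) hu]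

theorem gpdSurv_sub_gpdSurv_add_one {σ ξ x : ℝ} (hσ : 0 < σ) (hξ : 0 ≤ ξ) (hx : 0 ≤ x) :
    gpdSurv σ ξ x - gpdSurv σ ξ (x + 1)
      = (1 - (1 + ξ / (σ + ξ * x)) ^ (-1 / ξ)) * (σ + ξ * x) * fGPD σ ξ x := by
  have ht : 0 < σ + ξ * x := by positivity
  have hA : 0 < 1 + ξ * x / σ := by positivity
  have hstep : 1 + ξ * (x + 1) / σ = (1 + ξ / (σ + ξ * x)) * (1 + ξ * x / σ) := by
    field_simp
    ring
  have hscale : σ + ξ * x = σ * (1 + ξ * x / σ) := by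
    field_simp
  unfold gpdSurv fGPD
  rw [hstep, mul_rpow (by positivity) hA.le, rpow_sub_one hA.ne', hscale]
  field_simp

theorem pDGPD_div_fGPD {σ ξ : ℝ} (hσ : 0 < σ) (hξ : 0 ≤ ξ) (k : ℕ) :
    pDGPD σ ξ k / fGPD σ ξ k = (1 - (1 + ξ / (σ + ξ * k)) ^ (-1 / ξ)) * (σ + ξ * k) := by
  have hf : fGPD σ ξ k ≠ 0 := by unfold fGPD; positivity
  rw [div_eq_iff hf, pDGPD, ← gpdSurv_sub_gpdSurv_add_one hσ hξ k.cast_nonneg]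

theorem abs_pDGPD_div_fGPD_sub_one_le {σ ξ : ℝ} (hσ : 0 < σ) (hξ : 0 < ξ) (k : ℕ) :
    |pDGPD σ ξ k / fGPD σ ξ k - 1| ≤ (1 + ξ) / σ := by
  set t := σ + ξ * k with ht_def
  have ht : 0 < t := by positivity
  have hσt : σ ≤ t := le_add_of_nonneg_right (by positivity)
  have h := abs_one_sub_rpow_neg_div_sub_one_le (one_div_pos.2 hξ) (div_pos hξ ht)
  rw [pDGPD_div_fGPD hσ hξ.le, ← ht_def, neg_div,
    show (1 - (1 + ξ / t) ^ (-(1 / ξ))) * t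
      = (1 - (1 + ξ / t) ^ (-(1 / ξ))) / (1 / ξ * (ξ / t)) by field_simp]
  calc _ ≤ (1 / ξ + 1) * (ξ / t) := h
    _ = (1 + ξ) / t := by field_simp
    _ ≤ (1 + ξ) / σ := by gcongr

/-- For `ξ > 0`, one has the exact identity
`p_DGPD(k;σ,ξ)/f_GPD(k;σ,ξ) = {1 - (1 + ξ/(σ+ξk))^(-1/ξ)}·(σ+ξk)`, and
`sup_{k ∈ ℕ} |p_DGPD(k;σ,ξ)/f_GPD(k;σ,ξ) - 1| → 0` as `σ → ∞`. -/
theorem pDGPD_div_fGPD_identity_and_unif_tendsto_one (ξ : ℝ) (hξ : 0 < ξ) :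
    (∀ σ > (0:ℝ), ∀ k : ℕ,
      pDGPD σ ξ k / fGPD σ ξ k
        = (1 - (1 + ξ / (σ + ξ * k)) ^ (-1 / ξ)) * (σ + ξ * k)) ∧
    (∀ ε > (0:ℝ), ∃ S : ℝ, ∀ σ ≥ S, ∀ k : ℕ,
      |pDGPD σ ξ k / fGPD σ ξ k - 1| ≤ ε) := by
  refine ⟨fun σ hσ k => pDGPD_div_fGPD hσ hξ.le k, fun ε hε => ⟨(1 + ξ) / ε, fun σ hσ k => ?_⟩⟩
  have hσ_pos : 0 < σ := (div_pos (by linarith) hε).trans_le hσ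
  calc |pDGPD σ ξ k / fGPD σ ξ k - 1| ≤ (1 + ξ) / σ := abs_pDGPD_div_fGPD_sub_one_le hσ_pos hξ k
    _ ≤ ε := (div_le_comm₀ hσ_pos hε).2 hσ
end

section
/- Let ξ > 0. Then sup_{k ∈ ℕ} | p_DGPD(k; σ, ξ) / p_GZD(k; σ, ξ) − 1 | → 0 as σ → ∞. In the proof, the key observation is that f_GPD(k; σ, ξ)/p_GZD(k; σ, ξ) = σ^{−1} ∑_{i=0}^{∞} (1 + ξi/σ)^{−1/ξ−1}, which does not depend on k and converges to 1 as σ → ∞. -/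
/-- Generalized Zipf probability mass function
`p_GZD(k;σ,ξ) = (1 + ξk/σ)^(-1/ξ-1) / ∑_{i=0}^∞ (1 + ξi/σ)^(-1/ξ-1)`. -/
noncomputable def pGZD (σ ξ : ℝ) (k : ℕ) : ℝ :=
  (1 + ξ * k / σ) ^ (-1/ξ - 1) / ∑' i : ℕ, (1 + ξ * i / σ) ^ (-1/ξ - 1)

open Filter Topology Set

lemma tendsto_one_add_div_rpow_atTop (a p : ℝ) :
    Tendsto (fun σ : ℝ => (1 + a / σ) ^ p) atTop (𝓝 1) := by
  have hbase : Tendsto (fun σ : ℝ => 1 + a / σ) atTop (𝓝 1) := by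
    simpa using (tendsto_const_nhds.div_atTop tendsto_id).const_add (1 : ℝ)
  simpa [Function.comp_def] using
    (Real.continuousAt_rpow_const 1 p (Or.inl one_ne_zero)).tendsto.comp hbase

lemma neg_one_div_sub_one_nonpos {ξ : ℝ} (hξ : 0 ≤ ξ) : -1 / ξ - 1 ≤ 0 := by
  linarith [div_nonpos_of_nonpos_of_nonneg (neg_one_lt_zero.le) hξ]

noncomputable def fGPDSum (σ ξ : ℝ) : ℝ := ∑' i : ℕ, fGPD σ ξ i

section GPD

variable {σ ξ : ℝ}

lemma hasDerivAt_gpdSurv (hξ : ξ ≠ 0) {x : ℝ} (hx : 0 < 1 + ξ * x / σ) :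
    HasDerivAt (gpdSurv σ ξ) (-fGPD σ ξ x) x := by
  have hbase : HasDerivAt (fun u : ℝ => 1 + ξ * u / σ) (ξ / σ) x := by
    simpa using (((hasDerivAt_id x).const_mul ξ).div_const σ).const_add 1
  refine ((Real.hasDerivAt_rpow_const (p := -1 / ξ) (Or.inl hx.ne')).comp x hbase).congr_deriv ?_
  simp only [fGPD]
  field_simp

lemma fGPD_pos (hσ : 0 < σ) {x : ℝ} (hx : 0 < 1 + ξ * x / σ) : 0 < fGPD σ ξ x := by
  unfold fGPD; positivity

lemma fGPD_antitoneOn (hσ : 0 < σ) (hξ : 0 < ξ) : AntitoneOn (fGPD σ ξ) (Ici 0) := by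
  intro s (hs : 0 ≤ s) t _ hst
  unfold fGPD
  gcongr ?_ * ?_
  exact Real.rpow_le_rpow_of_nonpos (by positivity) (by gcongr) (neg_one_div_sub_one_nonpos hξ.le)

lemma exists_pDGPD_eq_fGPD (hσ : 0 < σ) (hξ : 0 < ξ) (k : ℕ) :
    ∃ c ∈ Ioo (k : ℝ) (k + 1), pDGPD σ ξ k = fGPD σ ξ c := by
  have hderiv : ∀ x ∈ Icc (k : ℝ) (k + 1), HasDerivAt (gpdSurv σ ξ) (-fGPD σ ξ x) x :=
    fun x hx => hasDerivAt_gpdSurv hξ.ne' (by have := (Nat.cast_nonneg k).trans hx.1; positivity)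
  obtain ⟨c, hc, hslope⟩ := exists_hasDerivAt_eq_slope (gpdSurv σ ξ) (fun x => -fGPD σ ξ x)
    (lt_add_one (k : ℝ)) (fun x hx => (hderiv x hx).continuousAt.continuousWithinAt)
    (fun x hx => hderiv x (Ioo_subset_Icc_self hx))
  refine ⟨c, hc, ?_⟩
  rw [add_sub_cancel_left, div_one] at hslope
  rw [pDGPD]
  linarith

lemma fGPD_succ_le_pDGPD (hσ : 0 < σ) (hξ : 0 < ξ) (k : ℕ) :
    fGPD σ ξ (k + 1) ≤ pDGPD σ ξ k := by
  obtain ⟨c, hc, hp⟩ := exists_pDGPD_eq_fGPD hσ hξ k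
  rw [hp]
  exact fGPD_antitoneOn hσ hξ (mem_Ici.2 ((Nat.cast_nonneg k).trans hc.1.le))
    (mem_Ici.2 (by positivity)) hc.2.le

lemma pDGPD_le_fGPD (hσ : 0 < σ) (hξ : 0 < ξ) (k : ℕ) :
    pDGPD σ ξ k ≤ fGPD σ ξ k := by
  obtain ⟨c, hc, hp⟩ := exists_pDGPD_eq_fGPD hσ hξ k
  rw [hp]
  exact fGPD_antitoneOn hσ hξ (mem_Ici.2 (Nat.cast_nonneg k))
    (mem_Ici.2 ((Nat.cast_nonneg k).trans hc.1.le)) hc.1.le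

lemma tendsto_gpdSurv_atTop (hσ : 0 < σ) (hξ : 0 < ξ) :
    Tendsto (gpdSurv σ ξ) atTop (𝓝 0) := by
  have hbase : Tendsto (fun x : ℝ => 1 + ξ * x / σ) atTop atTop :=
    tendsto_atTop_add_const_left _ _ ((tendsto_id.const_mul_atTop hξ).atTop_div_const hσ)
  show Tendsto (fun x : ℝ => (1 + ξ * x / σ) ^ (-1 / ξ)) atTop (𝓝 0)
  rw [neg_div]
  exact (tendsto_rpow_neg_atTop (one_div_pos.2 hξ)).comp hbase

lemma hasSum_pDGPD (hσ : 0 < σ) (hξ : 0 < ξ) : HasSum (pDGPD σ ξ) 1 := by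
  have hnonneg k : 0 ≤ pDGPD σ ξ k :=
    (fGPD_pos hσ (by positivity)).le.trans (fGPD_succ_le_pDGPD hσ hξ k)
  have hpartial n : ∑ k ∈ Finset.range n, pDGPD σ ξ k = 1 - gpdSurv σ ξ n := by
    have := Finset.sum_range_sub' (fun k : ℕ => gpdSurv σ ξ k) n
    simp only [Nat.cast_add, Nat.cast_one, Nat.cast_zero] at this
    rw [← show gpdSurv σ ξ 0 = 1 by simp [gpdSurv], ← this]
    rfl
  rw [hasSum_iff_tendsto_nat_of_nonneg hnonneg]
  simp only [hpartial]
  simpa using ((tendsto_gpdSurv_atTop hσ hξ).comp tendsto_natCast_atTop_atTop).const_sub 1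

lemma summable_fGPD (hσ : 0 < σ) (hξ : 0 < ξ) : Summable (fun i : ℕ => fGPD σ ξ i) := by
  rw [← summable_nat_add_iff 1]
  refine (hasSum_pDGPD hσ hξ).summable.of_nonneg_of_le
    (fun k => (fGPD_pos hσ (by positivity)).le) (fun k => ?_)
  simpa using fGPD_succ_le_pDGPD hσ hξ k

lemma one_le_fGPDSum (hσ : 0 < σ) (hξ : 0 < ξ) : 1 ≤ fGPDSum σ ξ :=
  (hasSum_pDGPD hσ hξ).tsum_eq ▸
    (hasSum_pDGPD hσ hξ).summable.tsum_le_tsum (pDGPD_le_fGPD hσ hξ) (summable_fGPD hσ hξ)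

lemma fGPDSum_le (hσ : 0 < σ) (hξ : 0 < ξ) : fGPDSum σ ξ ≤ 1 + σ⁻¹ := by
  have htail : ∑' k : ℕ, fGPD σ ξ (k + 1 : ℕ) ≤ 1 :=
    (hasSum_pDGPD hσ hξ).tsum_eq ▸
      ((summable_nat_add_iff 1).2 (summable_fGPD hσ hξ)).tsum_le_tsum
        (fun k => by simpa using fGPD_succ_le_pDGPD hσ hξ k) (hasSum_pDGPD hσ hξ).summable
  rw [fGPDSum, (summable_fGPD hσ hξ).tsum_eq_zero_add]
  simp only [fGPD, Nat.cast_zero, mul_zero, zero_div, add_zero, Real.one_rpow, mul_one] at htail ⊢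
  linarith

lemma tendsto_fGPDSum (hξ : 0 < ξ) :
    Tendsto (fun σ : ℝ => fGPDSum σ ξ) atTop (𝓝 1) := by
  have hupper : Tendsto (fun σ : ℝ => 1 + σ⁻¹) atTop (𝓝 1) := by
    simpa using tendsto_inv_atTop_zero.const_add (1 : ℝ)
  refine tendsto_of_tendsto_of_tendsto_of_le_of_le' tendsto_const_nhds hupper ?_ ?_
  · filter_upwards [eventually_gt_atTop 0] with σ hσ using one_le_fGPDSum hσ hξ
  · filter_upwards [eventually_gt_atTop 0] with σ hσ using fGPDSum_le hσ hξ

lemma fGPD_div_pGZD (hσ : 0 < σ) (hξ : 0 < ξ) (k : ℕ) :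
    fGPD σ ξ k / pGZD σ ξ k = fGPDSum σ ξ := by
  have hk : (1 + ξ * k / σ) ^ (-1 / ξ - 1) ≠ 0 := by positivity
  simp only [fGPDSum, fGPD, pGZD, tsum_mul_left]
  field_simp

lemma rpow_mul_fGPD_le_fGPD_add_one (hσ : 0 < σ) (hξ : 0 < ξ) {x : ℝ} (hx : 0 ≤ x) :
    (1 + ξ / σ) ^ (-1 / ξ - 1) * fGPD σ ξ x ≤ fGPD σ ξ (x + 1) := by
  have hsubmul : 1 + ξ * (x + 1) / σ ≤ (1 + ξ / σ) * (1 + ξ * x / σ) := by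
    have : 0 ≤ ξ / σ * (ξ * x / σ) := by positivity
    linarith [show (1 + ξ / σ) * (1 + ξ * x / σ) =
      1 + ξ * (x + 1) / σ + ξ / σ * (ξ * x / σ) by ring]
  have := Real.rpow_le_rpow_of_nonpos (by positivity) hsubmul (neg_one_div_sub_one_nonpos hξ.le)
  rw [Real.mul_rpow (by positivity) (by positivity)] at this
  unfold fGPD
  nlinarith [inv_pos.2 hσ]

lemma abs_pDGPD_div_pGZD_sub_one_le (hσ : 0 < σ) (hξ : 0 < ξ) (k : ℕ) :
    |pDGPD σ ξ k / pGZD σ ξ k - 1| ≤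
      max |(1 + ξ / σ) ^ (-1 / ξ - 1) * fGPDSum σ ξ - 1| |fGPDSum σ ξ - 1| := by
  have hf := fGPD_pos (ξ := ξ) (x := k) hσ (by positivity)
  have hT : 0 ≤ fGPDSum σ ξ := zero_le_one.trans (one_le_fGPDSum hσ hξ)
  have hratio : pDGPD σ ξ k / pGZD σ ξ k = pDGPD σ ξ k / fGPD σ ξ k * fGPDSum σ ξ := by
    rw [← fGPD_div_pGZD hσ hξ k, div_mul_div_cancel₀ hf.ne']
  have hlower : (1 + ξ / σ) ^ (-1 / ξ - 1) ≤ pDGPD σ ξ k / fGPD σ ξ k := by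
    rw [le_div_iff₀ hf]
    exact (rpow_mul_fGPD_le_fGPD_add_one hσ hξ (Nat.cast_nonneg k)).trans
      (fGPD_succ_le_pDGPD hσ hξ k)
  have hupper : pDGPD σ ξ k / fGPD σ ξ k ≤ 1 := (div_le_one hf).2 (pDGPD_le_fGPD hσ hξ k)
  rw [hratio]
  refine abs_le_max_abs_abs ?_ ?_
  · gcongr
  · linarith [mul_le_of_le_one_left hT hupper]

end GPD

/-- For `ξ > 0`, `sup_{k ∈ ℕ} |p_DGPD(k;σ,ξ)/p_GZD(k;σ,ξ) - 1| → 0` as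
`σ → ∞`; the key observation is the `k`-free identity
`f_GPD(k;σ,ξ)/p_GZD(k;σ,ξ) = σ⁻¹ ∑_{i=0}^∞ (1 + ξi/σ)^(-1/ξ-1)`, whose right-hand side
converges to `1` as `σ → ∞`. -/
theorem pDGPD_div_pGZD_unif_tendsto_one (ξ : ℝ) (hξ : 0 < ξ) :
    (∀ σ > (0:ℝ), ∀ k : ℕ,
      fGPD σ ξ k / pGZD σ ξ k = σ⁻¹ * ∑' i : ℕ, (1 + ξ * i / σ) ^ (-1/ξ - 1)) ∧
    Filter.Tendsto (fun σ : ℝ => σ⁻¹ * ∑' i : ℕ, (1 + ξ * i / σ) ^ (-1/ξ - 1))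
      Filter.atTop (nhds 1) ∧
    (∀ ε > (0:ℝ), ∃ S : ℝ, ∀ σ ≥ S, ∀ k : ℕ,
      |pDGPD σ ξ k / pGZD σ ξ k - 1| ≤ ε) := by
  have hnorm (σ : ℝ) : σ⁻¹ * ∑' i : ℕ, (1 + ξ * i / σ) ^ (-1/ξ - 1) = fGPDSum σ ξ :=
    tsum_mul_left.symm
  simp only [hnorm]
  refine ⟨fun σ hσ k => fGPD_div_pGZD hσ hξ k, tendsto_fGPDSum hξ, fun ε hε => ?_⟩
  have hT := tendsto_fGPDSum hξ
  have hgap : Tendsto (fun σ : ℝ => max |(1 + ξ / σ) ^ (-1 / ξ - 1) * fGPDSum σ ξ - 1|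
      |fGPDSum σ ξ - 1|) atTop (𝓝 0) := by
    have hprod := (tendsto_one_add_div_rpow_atTop ξ (-1 / ξ - 1)).mul hT
    simpa using ((hprod.sub_const 1).abs).max ((hT.sub_const 1).abs)
  obtain ⟨S, hS⟩ :=
    eventually_atTop.1 ((hgap.eventually (ge_mem_nhds hε)).and (eventually_gt_atTop 0))
  exact ⟨S, fun σ hσ k =>
    (abs_pDGPD_div_pGZD_sub_one_le (hS σ hσ).2 hξ k).trans (hS σ hσ).1⟩
end

section
/- Let ξ > 0, δ ∈ [0,1), and fix k ∈ ℕ. Then, as σ → ∞, p_DGPD(k; σ, ξ) / f_GPD(k + δ; σ, ξ) = 1 + (1 + ξ)(2δ − 1)/(2σ) + O(σ^{−2}). In particular, among continuity corrections δ ∈ [0,1), the first-order term vanishes exactly when δ = 1/2. -/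
/-!
Put `u = σ⁻¹`, `p = -1/ξ`, `a = ξk`, `b = ξ(k+1)` and `c = ξ(k+δ)`. Then the ratio is
`((1 + au)^p - (1 + bu)^p) / (u (1 + cu)^(p-1))`. Expanding the binomial series of `(1 + t)^p`
to second order in the numerator and to first order in the denominator, and using
`p (b - a) = -1`, the ratio is `1 + (p - 1)((a + b)/2 - c) u + O(u²)`, and
`(p - 1)((a + b)/2 - c) = (1 + ξ)(2δ - 1)/2`.
-/

open Filter Topology Asymptotics Finset

lemma Ring.choose_two_eq {R : Type*} [Field R] [CharZero R] (r : R) :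
    Ring.choose r 2 = r * (r - 1) / 2 := by
  rw [Ring.choose_eq_smul]
  simp only [Nat.factorial_two, Nat.cast_ofNat, descPochhammer_succ_right, descPochhammer_zero,
    CharP.cast_eq_zero, sub_zero, one_mul, Nat.cast_one, Polynomial.smeval_mul,
    Polynomial.smeval_X, pow_one, Polynomial.smeval_sub, Polynomial.smeval_one, pow_zero,
    one_smul, smul_eq_mul]
  ring

lemma one_add_mul_rpow_sub_sum_choose_isBigO (r a : ℝ) (n : ℕ) :
    (fun u : ℝ ↦ (1 + a * u) ^ r - ∑ i ∈ range n, Ring.choose r i * (a * u) ^ i)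
      =O[𝓝 0] fun u ↦ u ^ n := by
  have hseries := (Real.one_add_rpow_hasFPowerSeriesAt_zero (a := r)).isBigO_sub_partialSum_pow n
  have hscale : Tendsto (fun u : ℝ ↦ a * u) (𝓝 0) (𝓝 0) := by
    simpa using (continuous_const_mul a).tendsto 0
  have hpow : (fun u : ℝ ↦ ‖a * u‖ ^ n) =O[𝓝 0] fun u ↦ u ^ n := by
    simpa only [norm_mul, mul_pow, ← norm_pow] using
      ((isBigO_refl (fun u : ℝ ↦ u ^ n) (𝓝 0)).norm_left.const_mul_left (‖a‖ ^ n))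
  refine (hseries.comp_tendsto hscale).trans hpow |>.congr_left fun u ↦ ?_
  simp only [Function.comp_apply, zero_add, FormalMultilinearSeries.partialSum,
    binomialSeries_apply, List.ofFn_const, List.prod_replicate, smul_eq_mul]

section DifferenceQuotient

variable {a b c p E : ℝ}

lemma rpow_sub_rpow_sub_mul_rpow_isBigO (hab : p * (b - a) = -1)
    (hE : E = (p - 1) * ((a + b) / 2 - c)) :
    (fun u : ℝ ↦ (1 + a * u) ^ p - (1 + b * u) ^ p - u * (1 + E * u) * (1 + c * u) ^ (p - 1))
      =O[𝓝 0] fun u ↦ u ^ 3 := by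
  have ha := one_add_mul_rpow_sub_sum_choose_isBigO p a 3
  have hb := one_add_mul_rpow_sub_sum_choose_isBigO p b 3
  have hc := one_add_mul_rpow_sub_sum_choose_isBigO (p - 1) c 2
  simp only [sum_range_succ, sum_range_zero, Ring.choose_zero_right, Ring.choose_one_right,
    Ring.choose_two_eq, zero_add, pow_zero, pow_one, one_mul] at ha hb hc
  have hlin : (fun u : ℝ ↦ u * (1 + E * u)) =O[𝓝 0] fun u ↦ u := by
    have : Tendsto (fun u : ℝ ↦ 1 + E * u) (𝓝 0) (𝓝 1) := by
      simpa using ((continuous_const_mul E).const_add 1).tendsto 0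
    simpa using (isBigO_refl (fun u : ℝ ↦ u) (𝓝 0)).mul (this.isBigO_one ℝ)
  have hcorr : (fun u : ℝ ↦ u * (1 + E * u) * ((1 + c * u) ^ (p - 1) - (1 + (p - 1) * (c * u))))
      =O[𝓝 0] fun u ↦ u ^ 3 :=
    (hlin.mul hc).congr_right fun u ↦ by ring
  -- the `u³` coefficient of `u (1 + E u) (1 + (p - 1) c u)`, which the Taylor terms do not cancel
  have hcube := (isBigO_refl (fun u : ℝ ↦ u ^ 3) (𝓝 0)).const_mul_left (-(E * (p - 1) * c))
  refine ((ha.sub hb).sub hcorr |>.add hcube).congr_left fun u ↦ ?_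
  linear_combination (u + (p - 1) * (a + b) / 2 * u ^ 2) * hab + u ^ 2 * hE

lemma rpow_sub_rpow_div_mul_rpow_sub_isBigO (hab : p * (b - a) = -1)
    (hE : E = (p - 1) * ((a + b) / 2 - c)) :
    (fun u : ℝ ↦ ((1 + a * u) ^ p - (1 + b * u) ^ p) / (u * (1 + c * u) ^ (p - 1)) - (1 + E * u))
      =O[𝓝[>] 0] fun u ↦ u ^ 2 := by
  have hD : Tendsto (fun u : ℝ ↦ (1 + c * u) ^ (p - 1)) (𝓝 0) (𝓝 1) := by
    have hcont := ((continuous_const_mul c).const_add 1).continuousAt (x := 0)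
    simpa using (hcont.rpow_const (p := p - 1) (Or.inl (by simp))).tendsto
  have hDinv : (fun u : ℝ ↦ ((1 + c * u) ^ (p - 1))⁻¹) =O[𝓝 0] fun _ ↦ (1 : ℝ) :=
    (hD.inv₀ one_ne_zero).isBigO_one ℝ
  have hquot := ((rpow_sub_rpow_sub_mul_rpow_isBigO hab hE).mul
    (isBigO_refl (fun u : ℝ ↦ u⁻¹) (𝓝 0))).mul hDinv
  refine (hquot.mono nhdsWithin_le_nhds).congr' ?_ ?_
  · filter_upwards [self_mem_nhdsWithin, nhdsWithin_le_nhds (hD.eventually_ne one_ne_zero)]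
      with u hu hDu
    have hu : u ≠ 0 := ne_of_gt hu
    generalize (1 + c * u) ^ (p - 1) = D at hDu ⊢
    field_simp
  · filter_upwards [self_mem_nhdsWithin] with u hu
    have hu : u ≠ 0 := ne_of_gt hu
    field_simp

end DifferenceQuotient

lemma pDGPD_div_fGPD_sub_isBigO {ξ : ℝ} (hξ : ξ ≠ 0) (δ : ℝ) (k : ℕ) :
    (fun σ ↦ pDGPD σ ξ k / fGPD σ ξ (k + δ) - (1 + (1 + ξ) * (2 * δ - 1) / (2 * σ)))
      =O[atTop] fun σ ↦ σ⁻¹ ^ 2 := by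
  have hab : -1 / ξ * (ξ * (k + 1) - ξ * k) = -1 := by field_simp; ring
  have hE : (1 + ξ) * (2 * δ - 1) / 2
      = (-1 / ξ - 1) * ((ξ * k + ξ * (k + 1)) / 2 - ξ * (k + δ)) := by
    field_simp; ring
  refine ((rpow_sub_rpow_div_mul_rpow_sub_isBigO hab hE).comp_tendsto
    tendsto_inv_atTop_nhdsGT_zero).congr_left fun σ ↦ ?_
  simp only [Function.comp_apply, pDGPD, gpdSurv, fGPD, div_eq_mul_inv]
  ring_nf

theorem pDGPD_continuity_correction_expansion_general
    (ξ : ℝ) (hξ : 0 < ξ) (δ : ℝ) (k : ℕ) :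
    (∃ C > (0:ℝ), ∃ σ₀ : ℝ, ∀ σ ≥ σ₀,
      |pDGPD σ ξ k / fGPD σ ξ ((k : ℝ) + δ)
          - (1 + (1 + ξ) * (2 * δ - 1) / (2 * σ))| ≤ C / σ ^ 2) ∧
    ((1 + ξ) * (2 * δ - 1) = 0 ↔ δ = 1 / 2) := by
  refine ⟨?_, ?_⟩
  · obtain ⟨C, hC, hbound⟩ := (pDGPD_div_fGPD_sub_isBigO hξ.ne' δ k).exists_pos
    obtain ⟨σ₀, hσ₀⟩ := eventually_atTop.1 hbound.bound
    refine ⟨C, hC, σ₀, fun σ hσ ↦ ?_⟩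
    simpa [div_eq_mul_inv] using hσ₀ σ hσ
  · rw [mul_eq_zero, or_iff_right (by positivity)]
    constructor <;> intro h <;> linarith

/-- For `ξ > 0`, `δ ∈ [0,1)` and fixed `k ∈ ℕ`, as `σ → ∞`,
`p_DGPD(k;σ,ξ)/f_GPD(k+δ;σ,ξ) = 1 + (1+ξ)(2δ-1)/(2σ) + O(σ⁻²)`; and among continuity
corrections `δ ∈ [0,1)`, the first-order term vanishes exactly when `δ = 1/2`. -/
theorem pDGPD_continuity_correction_expansion
    (ξ : ℝ) (hξ : 0 < ξ) (δ : ℝ) (hδ : δ ∈ Set.Ico (0:ℝ) 1) (k : ℕ) :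
    (∃ C > (0:ℝ), ∃ σ₀ : ℝ, ∀ σ ≥ σ₀,
      |pDGPD σ ξ k / fGPD σ ξ ((k : ℝ) + δ)
          - (1 + (1 + ξ) * (2 * δ - 1) / (2 * σ))| ≤ C / σ ^ 2) ∧
    ((1 + ξ) * (2 * δ - 1) = 0 ↔ δ = 1 / 2) :=
  pDGPD_continuity_correction_expansion_general ξ hξ δ k
end
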